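/- arXiv:1008.1512 — 4 statements merged into one kernel-verified Lean document; each statement's English description precedes it below -/
import Mathlib

section
/- Let ξ take positive values γ_1 < ... < γ_N < 1 with probabilities p_i, and let Y = Σ_{k≥0} ξ_1···ξ_k for i.i.d. copies ξ_j of ξ. If the entropy condition Σ_i p_i log γ_i < Σ_i p_i log p_i holds, then the distribution of Y is singular with respect to Lebesgue measure. -/
/-!
Write `λ = ∑ pᵢ log γᵢ < H = ∑ pᵢ log pᵢ` and fix `λ < a < b < H`. By the strong law of large
numbers, for almost every `ω` and all large `n` the word `w = (ξ₀ ω, …, ξₙ₋₁ ω)` satisfies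
`ξ₀ ⋯ ξₙ₋₁ ≤ e^{na}` and `p(w) = ∏ p(ξⱼ) ≥ e^{nb}`. The tail of the series after `n` terms is at
most `ξ₀ ⋯ ξₙ₋₁ / (1 - max γ)`, so `Y` lies in an interval of length `O(e^{na})` whose left end
depends only on `w`. Since the weights `p(w)` of the words of length `n` sum to `1`, at most
`e^{-nb}` words are this likely; the union of these intervals has Lebesgue measure
`O(e^{n(a-b)})`, which is summable, and Borel–Cantelli shows that the law of `Y` is carried by a
Lebesgue-null set.
-/

open MeasureTheory ProbabilityTheory Finset Filter Topology Real

section ProdSeries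

variable {q : ℝ} {x : ℕ → ℝ}

lemma prod_range_le_pow (hx0 : ∀ j, 0 ≤ x j) (hxq : ∀ j, x j ≤ q) (k : ℕ) :
    ∏ j ∈ range k, x j ≤ q ^ k := by
  simpa using prod_le_prod (s := range k) (fun j _ => hx0 j) (fun j _ => hxq j)

lemma summable_prod_range (hq : q < 1) (hx0 : ∀ j, 0 ≤ x j) (hxq : ∀ j, x j ≤ q) :
    Summable fun k => ∏ j ∈ range k, x j :=
  (summable_geometric_of_lt_one ((hx0 0).trans (hxq 0)) hq).of_nonneg_of_le
    (fun _ => prod_nonneg fun j _ => hx0 j) (prod_range_le_pow hx0 hxq)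

lemma tsum_prod_range_le (hq : q < 1) (hx0 : ∀ j, 0 ≤ x j) (hxq : ∀ j, x j ≤ q) :
    ∑' k, ∏ j ∈ range k, x j ≤ (1 - q)⁻¹ := by
  rw [← tsum_geometric_of_lt_one ((hx0 0).trans (hxq 0)) hq]
  exact (summable_prod_range hq hx0 hxq).tsum_le_tsum (prod_range_le_pow hx0 hxq)
    (summable_geometric_of_lt_one ((hx0 0).trans (hxq 0)) hq)

lemma tsum_prod_range_mem_Icc (hq : q < 1) (hx0 : ∀ j, 0 ≤ x j) (hxq : ∀ j, x j ≤ q) (n : ℕ) :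
    ∑' k, ∏ j ∈ range k, x j ∈ Set.Icc (∑ k ∈ range n, ∏ j ∈ range k, x j)
      (∑ k ∈ range n, ∏ j ∈ range k, x j + (∏ j ∈ range n, x j) * (1 - q)⁻¹) := by
  rw [← (summable_prod_range hq hx0 hxq).sum_add_tsum_nat_add n]
  have htail : ∑' k, ∏ j ∈ range (k + n), x j
      = (∏ j ∈ range n, x j) * ∑' k, ∏ j ∈ range k, x (n + j) := by
    rw [← tsum_mul_left]
    simp only [add_comm _ n, prod_range_add]
  rw [htail]
  have hP : 0 ≤ ∏ j ∈ range n, x j := prod_nonneg fun j _ => hx0 j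
  refine ⟨le_add_of_nonneg_right (mul_nonneg hP (tsum_nonneg fun k => ?_)), ?_⟩
  · exact prod_nonneg fun j _ => hx0 _
  · gcongr
    exact tsum_prod_range_le hq (fun j => hx0 _) (fun j => hxq _)

end ProdSeries

lemma card_mul_le_one_of_le_prod {α : Type*} {s : Finset α} {ρ : α → ℝ}
    (hρ0 : ∀ x ∈ s, 0 ≤ ρ x) (hρ1 : ∑ x ∈ s, ρ x ≤ 1) {n : ℕ} {T : Finset (Fin n → α)}
    (hT : T ⊆ Fintype.piFinset fun _ => s) {t : ℝ} (ht : ∀ w ∈ T, t ≤ ∏ j, ρ (w j)) :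
    #T * t ≤ 1 :=
  calc #T * t = ∑ _w ∈ T, t := by rw [sum_const, nsmul_eq_mul]
    _ ≤ ∑ w ∈ T, ∏ j, ρ (w j) := sum_le_sum ht
    _ ≤ ∑ w ∈ Fintype.piFinset fun _ => s, ∏ j, ρ (w j) :=
      sum_le_sum_of_subset_of_nonneg hT fun w hw _ =>
        prod_nonneg fun j _ => hρ0 _ (Fintype.mem_piFinset.1 hw j)
    _ = (∑ x ∈ s, ρ x) ^ n := by rw [← prod_univ_sum, prod_const, card_univ, Fintype.card_fin]
    _ ≤ 1 := pow_le_one₀ (sum_nonneg hρ0) hρ1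

section Covering

variable {s : Finset ℝ} {ρ : ℝ → ℝ} {a b C q : ℝ}

noncomputable def wordPartialSum {n : ℕ} (w : Fin n → ℝ) : ℝ :=
  ∑ k ∈ range n, ∏ j ∈ range k, if h : j < n then w ⟨j, h⟩ else 0

noncomputable def typicalWords (s : Finset ℝ) (ρ : ℝ → ℝ) (a b : ℝ) (n : ℕ) :
    Finset (Fin n → ℝ) :=
  {w ∈ Fintype.piFinset fun _ => s | ∏ j, w j ≤ exp (n * a) ∧ exp (n * b) ≤ ∏ j, ρ (w j)}

noncomputable def coveringSet (s : Finset ℝ) (ρ : ℝ → ℝ) (a b C : ℝ) (n : ℕ) : Set ℝ :=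
  ⋃ w ∈ typicalWords s ρ a b n, Set.Icc (wordPartialSum w) (wordPartialSum w + C * exp (n * a))

lemma measurableSet_coveringSet (n : ℕ) : MeasurableSet (coveringSet s ρ a b C n) :=
  (typicalWords s ρ a b n).measurableSet_biUnion fun _ _ => measurableSet_Icc

lemma volume_coveringSet_le (hρ0 : ∀ x ∈ s, 0 ≤ ρ x) (hρ1 : ∑ x ∈ s, ρ x ≤ 1) (hC : 0 ≤ C)
    (n : ℕ) : volume (coveringSet s ρ a b C n) ≤ ENNReal.ofReal (C * exp (a - b) ^ n) := by
  set T := typicalWords s ρ a b n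
  have hcard : #T * exp (n * b) ≤ 1 :=
    card_mul_le_one_of_le_prod hρ0 hρ1 (filter_subset _ _) fun w hw => (mem_filter.1 hw).2.2
  calc volume (coveringSet s ρ a b C n)
      ≤ ∑ w ∈ T, volume (Set.Icc (wordPartialSum w) (wordPartialSum w + C * exp (n * a))) :=
        measure_biUnion_finset_le _ _
    _ = ENNReal.ofReal (#T * (C * exp (n * a))) := by
        simp only [Real.volume_Icc, add_sub_cancel_left, sum_const, nsmul_eq_mul]
        rw [ENNReal.ofReal_mul (Nat.cast_nonneg _), ENNReal.ofReal_natCast]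
    _ ≤ ENNReal.ofReal (C * exp (a - b) ^ n) := by
        refine ENNReal.ofReal_le_ofReal ?_
        have hsplit : #T * (C * exp (n * a)) = (#T * exp (n * b)) * (C * exp (a - b) ^ n) := by
          rw [← exp_nat_mul, mul_sub, exp_sub]
          field_simp
        rw [hsplit]
        exact mul_le_of_le_one_left (by positivity) hcard

lemma tsum_volume_coveringSet_ne_top (hρ0 : ∀ x ∈ s, 0 ≤ ρ x) (hρ1 : ∑ x ∈ s, ρ x ≤ 1)
    (hC : 0 ≤ C) (hab : a < b) : ∑' n, volume (coveringSet s ρ a b C n) ≠ ⊤ := by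
  have hr : Summable fun n => C * exp (a - b) ^ n :=
    (summable_geometric_of_lt_one (exp_nonneg _) (exp_lt_one_iff.2 (sub_neg.2 hab))).mul_left C
  refine ne_top_of_le_ne_top (ENNReal.ofReal_ne_top (r := ∑' n, C * exp (a - b) ^ n)) ?_
  rw [ENNReal.ofReal_tsum_of_nonneg (fun n => by positivity) hr]
  exact ENNReal.tsum_le_tsum (volume_coveringSet_le hρ0 hρ1 hC)

lemma tsum_prod_range_mem_coveringSet {x : ℕ → ℝ} (hxs : ∀ j, x j ∈ s) (hx0 : ∀ j, 0 ≤ x j)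
    (hxq : ∀ j, x j ≤ q) (hq : q < 1) {n : ℕ} (ha : ∏ j ∈ range n, x j ≤ exp (n * a))
    (hb : exp (n * b) ≤ ∏ j ∈ range n, ρ (x j)) :
    ∑' k, ∏ j ∈ range k, x j ∈ coveringSet s ρ a b (1 - q)⁻¹ n := by
  have hw : (fun j : Fin n => x j) ∈ typicalWords s ρ a b n := by
    simp only [typicalWords, mem_filter, Fintype.mem_piFinset, Fin.prod_univ_eq_prod_range
      (fun j => x j), Fin.prod_univ_eq_prod_range (fun j => ρ (x j))]
    exact ⟨fun j => hxs j, ha, hb⟩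
  have hS : wordPartialSum (fun j : Fin n => x j) = ∑ k ∈ range n, ∏ j ∈ range k, x j :=
    sum_congr rfl fun k hk => prod_congr rfl fun j hj =>
      dif_pos ((mem_range.1 hj).trans_le (mem_range.1 hk).le)
  refine Set.mem_biUnion hw ?_
  obtain ⟨hlo, hhi⟩ := tsum_prod_range_mem_Icc hq hx0 hxq n
  rw [hS]
  refine ⟨hlo, hhi.trans ?_⟩
  rw [mul_comm]
  gcongr

lemma prod_range_eq_exp_mul_average_log {y : ℕ → ℝ} (hy : ∀ j, 0 < y j) {n : ℕ} (hn : n ≠ 0) :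
    ∏ j ∈ range n, y j = exp (n * ((n : ℝ)⁻¹ * ∑ j ∈ range n, log (y j))) := by
  rw [mul_inv_cancel_left₀ (Nat.cast_ne_zero.2 hn), exp_sum]
  exact prod_congr rfl fun j _ => (exp_log (hy j)).symm

lemma eventually_tsum_prod_range_mem_coveringSet {x : ℕ → ℝ} {lam H : ℝ} (hxs : ∀ j, x j ∈ s)
    (hx0 : ∀ j, 0 < x j) (hxq : ∀ j, x j ≤ q) (hq : q < 1) (hρx : ∀ j, 0 < ρ (x j))
    (hlam : Tendsto (fun n : ℕ => (n : ℝ)⁻¹ * ∑ j ∈ range n, log (x j)) atTop (𝓝 lam))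
    (hH : Tendsto (fun n : ℕ => (n : ℝ)⁻¹ * ∑ j ∈ range n, log (ρ (x j))) atTop (𝓝 H))
    (ha : lam < a) (hb : b < H) :
    ∀ᶠ n in atTop, ∑' k, ∏ j ∈ range k, x j ∈ coveringSet s ρ a b (1 - q)⁻¹ n := by
  filter_upwards [hlam.eventually_lt_const ha, hH.eventually_const_lt hb,
    eventually_ne_atTop 0] with n hna hnb hn
  refine tsum_prod_range_mem_coveringSet hxs (fun j => (hx0 j).le) hxq hq ?_ ?_
  · rw [prod_range_eq_exp_mul_average_log hx0 hn]
    gcongr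
  · rw [prod_range_eq_exp_mul_average_log hρx hn]
    gcongr

end Covering

section Probability

variable {Ω β : Type*} [MeasurableSpace Ω] {P : Measure Ω}

lemma ae_measureReal_preimage_singleton_pos [IsFiniteMeasure P] {X : Ω → β} {s : Set β}
    (hs : s.Countable) (hXs : ∀ ω, X ω ∈ s) : ∀ᵐ ω ∂P, 0 < P.real (X ⁻¹' {X ω}) := by
  have hnull : P (⋃ x ∈ {x ∈ s | P (X ⁻¹' {x}) = 0}, X ⁻¹' {x}) = 0 :=
    (measure_biUnion_null_iff (hs.mono (Set.sep_subset _ _))).2 fun _ hx => hx.2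
  refine measure_mono_null (fun ω (hω : ¬ 0 < P.real (X ⁻¹' {X ω})) => ?_) hnull
  refine Set.mem_biUnion (x := X ω) ⟨hXs ω, ?_⟩ rfl
  by_contra h
  exact hω (ENNReal.toReal_pos h (measure_ne_top _ _))

lemma measurable_tsum_prod_range {X : ℕ → Ω → ℝ} (hX : ∀ j, Measurable (X j)) {q : ℝ}
    (hq : q < 1) (hX0 : ∀ j ω, 0 ≤ X j ω) (hXq : ∀ j ω, X j ω ≤ q) :
    Measurable fun ω => ∑' k, ∏ j ∈ range k, X j ω :=
  measurable_of_tendsto_metrizable (fun n => by fun_prop) (tendsto_pi_nhds.2 fun ω =>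
    (summable_prod_range hq (hX0 · ω) (hXq · ω)).hasSum.tendsto_sum_nat)

variable [MeasurableSpace β]

section IID

variable [IsFiniteMeasure P] [MeasurableSingletonClass β] {X : ℕ → Ω → β}

lemma ae_forall_measureReal_preimage_singleton_pos (hident : ∀ j, IdentDistrib (X j) (X 0) P P)
    {s : Set β} (hs : s.Countable) (hXs : ∀ j ω, X j ω ∈ s) :
    ∀ᵐ ω ∂P, ∀ j, 0 < P.real (X 0 ⁻¹' {X j ω}) :=
  ae_all_iff.2 fun j => (ae_measureReal_preimage_singleton_pos hs (hXs j)).mono fun ω hω => by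
    rwa [measureReal_def, ← (hident j).measure_mem_eq (measurableSet_singleton _)]

theorem ae_tendsto_frequency (hX : ∀ j, Measurable (X j))
    (hindep : Pairwise fun i j => IndepFun (X i) (X j) P)
    (hident : ∀ j, IdentDistrib (X j) (X 0) P P) (x : β) :
    ∀ᵐ ω ∂P, Tendsto
      (fun n : ℕ => (n : ℝ)⁻¹ * ∑ j ∈ range n, ({x} : Set β).indicator 1 (X j ω)) atTop
      (𝓝 (P.real (X 0 ⁻¹' {x}))) := by
  have hg : Measurable (({x} : Set β).indicator (1 : β → ℝ)) :=
    measurable_const.indicator (measurableSet_singleton x)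
  have hint : Integrable (fun ω => ({x} : Set β).indicator (1 : β → ℝ) (X 0 ω)) P :=
    (integrable_const (1 : ℝ)).indicator (hX 0 (measurableSet_singleton x))
  have hmean : P[fun ω => ({x} : Set β).indicator (1 : β → ℝ) (X 0 ω)]
      = P.real (X 0 ⁻¹' {x}) := by
    rw [← integral_map (hX 0).aemeasurable hg.aestronglyMeasurable,
      integral_indicator_one (measurableSet_singleton x),
      map_measureReal_apply (hX 0) (measurableSet_singleton x)]
  simpa only [hmean, smul_eq_mul] using
    strong_law_ae (fun j ω => ({x} : Set β).indicator 1 (X j ω)) hint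
      (fun i j hij => (hindep hij).comp hg hg) fun j => (hident j).comp hg

theorem ae_tendsto_average_of_finite_range (hX : ∀ j, Measurable (X j))
    (hindep : Pairwise fun i j => IndepFun (X i) (X j) P)
    (hident : ∀ j, IdentDistrib (X j) (X 0) P P) {s : Finset β} (hXs : ∀ j ω, X j ω ∈ s)
    (f : β → ℝ) :
    ∀ᵐ ω ∂P, Tendsto (fun n : ℕ => (n : ℝ)⁻¹ * ∑ j ∈ range n, f (X j ω)) atTop
      (𝓝 (∑ x ∈ s, P.real (X 0 ⁻¹' {x}) * f x)) := by
  have hdecomp : ∀ ω j, f (X j ω) = ∑ x ∈ s, f x * ({x} : Set β).indicator 1 (X j ω) := by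
    intro ω j
    rw [sum_eq_single_of_mem _ (hXs j ω) fun x _ hx => by simp [Ne.symm hx]]
    simp
  filter_upwards [(eventually_all_finset s).2 fun x _ => ae_tendsto_frequency hX hindep hident x]
    with ω hω
  have hrw : ∀ n : ℕ, (n : ℝ)⁻¹ * ∑ j ∈ range n, f (X j ω)
      = ∑ x ∈ s, f x * ((n : ℝ)⁻¹ * ∑ j ∈ range n, ({x} : Set β).indicator 1 (X j ω)) := by
    intro n
    simp only [hdecomp ω, mul_sum]
    rw [sum_comm]
    exact sum_congr rfl fun x _ => sum_congr rfl fun j _ => by ring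
  simp only [hrw]
  refine tendsto_finsetSum s fun x hx => ?_
  rw [mul_comm (P.real _) (f x)]
  exact (hω x hx).const_mul (f x)

end IID

lemma mutuallySingular_map_of_frequently_mem {Y : Ω → β} (hY : AEMeasurable Y P)
    {A : ℕ → Set β} (hA : ∀ n, MeasurableSet (A n)) (hYA : ∀ᵐ ω ∂P, ∃ᶠ n in atTop, Y ω ∈ A n)
    {ν : Measure β} (hν : ∑' n, ν (A n) ≠ ⊤) : P.map Y ⟂ₘ ν := by
  have hL : MeasurableSet (limsup A atTop) := MeasurableSet.measurableSet_limsup hA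
  refine ⟨(limsup A atTop)ᶜ, hL.compl, ?_, by
    rw [compl_compl]; exact measure_limsup_atTop_eq_zero hν⟩
  exact (ae_map_iff hY hL).2 (hYA.mono fun ω hω => mem_limsup_iff_frequently_mem.2 hω)

theorem mutuallySingular_map_tsum_prod_range [IsProbabilityMeasure P] {X : ℕ → Ω → ℝ}
    (hX : ∀ j, Measurable (X j)) (hindep : Pairwise fun i j => IndepFun (X i) (X j) P)
    (hident : ∀ j, IdentDistrib (X j) (X 0) P P) {s : Finset ℝ} (hXs : ∀ j ω, X j ω ∈ s)
    (hs0 : ∀ x ∈ s, 0 < x) (hs1 : ∀ x ∈ s, x < 1)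
    (hentropy : ∑ x ∈ s, P.real (X 0 ⁻¹' {x}) * log x
      < ∑ x ∈ s, P.real (X 0 ⁻¹' {x}) * log (P.real (X 0 ⁻¹' {x}))) :
    P.map (fun ω => ∑' k, ∏ j ∈ range k, X j ω) ⟂ₘ volume := by
  obtain ⟨ω₀⟩ := nonempty_of_isProbabilityMeasure P
  have hs : s.Nonempty := ⟨X 0 ω₀, hXs 0 ω₀⟩
  obtain ⟨q, hq, hXq⟩ : ∃ q < 1, ∀ j ω, X j ω ≤ q :=
    ⟨s.max' hs, hs1 _ (s.max'_mem hs), fun j ω => s.le_max' _ (hXs j ω)⟩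
  have hX0 : ∀ j ω, 0 < X j ω := fun j ω => hs0 _ (hXs j ω)
  obtain ⟨a, hlama, haH⟩ := exists_between hentropy
  obtain ⟨b, hab, hbH⟩ := exists_between haH
  refine mutuallySingular_map_of_frequently_mem
    (A := coveringSet s (fun x => P.real (X 0 ⁻¹' {x})) a b (1 - q)⁻¹)
    (measurable_tsum_prod_range hX hq (fun j ω => (hX0 j ω).le) hXq).aemeasurable
    (fun _ => measurableSet_coveringSet _) ?_ ?_
  · filter_upwards [ae_tendsto_average_of_finite_range hX hindep hident hXs log,
      ae_tendsto_average_of_finite_range hX hindep hident hXs fun x => log (P.real (X 0 ⁻¹' {x})),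
      ae_forall_measureReal_preimage_singleton_pos hident s.countable_toSet hXs]
      with ω hlog hlogρ hρω
    exact (eventually_tsum_prod_range_mem_coveringSet (ρ := fun x => P.real (X 0 ⁻¹' {x}))
      (hXs · ω) (hX0 · ω) (hXq · ω) hq hρω hlog hlogρ hlama hbH).frequently
  · refine tsum_volume_coveringSet_ne_top (fun _ _ => measureReal_nonneg) ?_
      (inv_nonneg.2 (sub_nonneg.2 hq.le)) hab
    rw [sum_measureReal_preimage_singleton s fun x _ => hX 0 (measurableSet_singleton x)]
    exact measureReal_le_one

end Probability

theorem stmt4_entropy_singular_general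
    {Ω : Type*} [MeasurableSpace Ω] (P : Measure Ω) [IsProbabilityMeasure P]
    (N : ℕ) (γ : Fin N → ℝ)
    (hγpos : ∀ i, 0 < γ i) (hγmono : StrictMono γ) (hγlt : ∀ i, γ i < 1)
    (ξ : ℕ → Ω → ℝ)
    (hmeas : ∀ j, Measurable (ξ j))
    (hval : ∀ j ω, ξ j ω ∈ Set.range γ)
    (hindep : iIndepFun (m := fun _ : ℕ => (inferInstance : MeasurableSpace ℝ)) ξ P)
    (hident : ∀ j, Measure.map (ξ j) P = Measure.map (ξ 0) P)
    (p : Fin N → ℝ) (hp : ∀ i, p i = (P {ω | ξ 0 ω = γ i}).toReal)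
    (hentropy : ∑ i, p i * Real.log (γ i) < ∑ i, p i * Real.log (p i))
    (Y : Ω → ℝ) (hY : ∀ ω, Y ω = ∑' k, ∏ j ∈ Finset.range k, ξ j ω) :
    (Measure.map Y P) ⟂ₘ (volume : Measure ℝ) := by
  classical
  have hξs : ∀ j ω, ξ j ω ∈ univ.image γ := fun j ω => by
    obtain ⟨i, hi⟩ := hval j ω
    exact hi ▸ mem_image_of_mem γ (mem_univ i)
  have hργ : ∀ i, P.real (ξ 0 ⁻¹' {γ i}) = p i := fun i => (hp i).symm
  rw [funext hY]
  refine mutuallySingular_map_tsum_prod_range hmeas (fun i j hij => hindep.indepFun hij)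
    (fun j => ⟨(hmeas j).aemeasurable, (hmeas 0).aemeasurable, hident j⟩) hξs ?_ ?_ ?_
  · simpa only [forall_mem_image, mem_univ, true_imp_iff] using hγpos
  · simpa only [forall_mem_image, mem_univ, true_imp_iff] using hγlt
  · simpa only [sum_image hγmono.injective.injOn, hργ] using hentropy

/-- Theorem 1 of the paper. Let `ξ` take positive values
`γ₁ < ⋯ < γ_N < 1` with probabilities `p i`, and `Y = ∑_{k≥0} ξ₁⋯ξ_k` for
i.i.d. copies `ξ j` of `ξ`.  If the entropy condition
`∑ i, p i * log (γ i) < ∑ i, p i * log (p i)` holds, then the distribution of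
`Y` is singular with respect to Lebesgue measure. -/
theorem stmt4_entropy_singular
    {Ω : Type*} [MeasurableSpace Ω] (P : Measure Ω) [IsProbabilityMeasure P]
    (N : ℕ) (hN : 0 < N) (γ : Fin N → ℝ)
    (hγpos : ∀ i, 0 < γ i) (hγmono : StrictMono γ) (hγlt : ∀ i, γ i < 1)
    (ξ : ℕ → Ω → ℝ)
    (hmeas : ∀ j, Measurable (ξ j))
    (hval : ∀ j ω, ξ j ω ∈ Set.range γ)
    (hindep : iIndepFun (m := fun _ : ℕ => (inferInstance : MeasurableSpace ℝ)) ξ P)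
    (hident : ∀ j, Measure.map (ξ j) P = Measure.map (ξ 0) P)
    (p : Fin N → ℝ) (hp : ∀ i, p i = (P {ω | ξ 0 ω = γ i}).toReal)
    (hentropy : ∑ i, p i * Real.log (γ i) < ∑ i, p i * Real.log (p i))
    (Y : Ω → ℝ) (hY : ∀ ω, Y ω = ∑' k, ∏ j ∈ Finset.range k, ξ j ω) :
    (Measure.map Y P) ⟂ₘ (volume : Measure ℝ) :=
  stmt4_entropy_singular_general P N γ hγpos hγmono hγlt ξ hmeas hval hindep hident p hp hentropy Y
    hY
end

section
/- Let (X_j)_{j≥1} be i.i.d. with P(X_1 = ±1) = 1/2, S_k = X_1 + ... + X_k, ν > 1, and Y = Σ_{k≥0} exp(S_k − kν). Then the distribution of Y is singular with respect to Lebesgue measure. -/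
/-!
By the strong law of large numbers, `S n ≤ ε n` for all large `n`, for every `ε > 0`. Once the
first `n` steps are fixed, `Y` lies in an interval whose left end is the partial sum
`∑ k < n, exp (S k - k ν)` and whose length is at most `exp (S n - n ν) / (1 - exp (1 - ν))`
(the tail is dominated by a geometric series because the steps are `≤ 1`). There are at most
`2 ^ n` such intervals, so eventually `Y` lies in a set of Lebesgue measure
`≤ (2 exp (ε - ν)) ^ n / (1 - exp (1 - ν))`. This is summable as soon as `ε < ν - log 2`, which
is possible since `ν > 1 > log 2`, and Borel–Cantelli gives a Lebesgue-null set carrying the law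
of `Y`.
-/

open MeasureTheory ProbabilityTheory Finset ENNReal Filter Topology

noncomputable section

def expWalk (ν : ℝ) (a : ℕ → ℝ) (k : ℕ) : ℝ :=
  Real.exp ((∑ j ∈ range k, a j) - k * ν)

section ExpWalk

variable {ν : ℝ} {a : ℕ → ℝ}

lemma exp_one_sub_lt_one (hν : 1 < ν) : Real.exp (1 - ν) < 1 :=
  Real.exp_lt_one_iff.2 (by linarith)

lemma sum_range_add_le (ha : ∀ j, a j ≤ 1) (n m : ℕ) :
    ∑ j ∈ range (n + m), a j ≤ ∑ j ∈ range n, a j + m := by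
  rw [sum_range_add]
  gcongr
  simpa using sum_le_sum fun j (_ : j ∈ range m) => ha (n + j)

lemma expWalk_add_le (ha : ∀ j, a j ≤ 1) (n m : ℕ) :
    expWalk ν a (n + m) ≤ expWalk ν a n * Real.exp (1 - ν) ^ m := by
  rw [expWalk, expWalk, ← Real.exp_nat_mul, ← Real.exp_add, Real.exp_le_exp]
  have := sum_range_add_le ha n m
  push_cast
  linarith

lemma summable_expWalk (hν : 1 < ν) (ha : ∀ j, a j ≤ 1) : Summable (expWalk ν a) := by
  have hgeom := summable_geometric_of_lt_one (Real.exp_pos _).le (exp_one_sub_lt_one hν)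
  refine .of_nonneg_of_le (fun k => (Real.exp_pos _).le) (fun k => ?_)
    (hgeom.mul_left (expWalk ν a 0))
  simpa using expWalk_add_le (ν := ν) ha 0 k

lemma tsum_expWalk_le (hν : 1 < ν) (ha : ∀ j, a j ≤ 1) (n : ℕ) :
    ∑' k, expWalk ν a k ≤
      ∑ k ∈ range n, expWalk ν a k + expWalk ν a n * (1 - Real.exp (1 - ν))⁻¹ := by
  have hr := exp_one_sub_lt_one hν
  have hgeom := summable_geometric_of_lt_one (Real.exp_pos (1 - ν)).le hr
  rw [← (summable_expWalk hν ha).sum_add_tsum_nat_add n,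
    ← tsum_geometric_of_lt_one (Real.exp_pos _).le hr, ← tsum_mul_left]
  gcongr with m
  · exact (summable_nat_add_iff n).2 (summable_expWalk hν ha)
  · exact hgeom.mul_left _
  · rw [add_comm]
    exact expWalk_add_le ha n m

end ExpWalk

-- The pairs `(∑ k < n, expWalk ν a k, ∑ j < n, a j)` reachable by `V`-valued steps `a`.
def walkStates (ν : ℝ) (V : Finset ℝ) : ℕ → Finset (ℝ × ℝ)
  | 0 => {(0, 0)}
  | n + 1 => (walkStates ν V n ×ˢ V).image
      fun p => (p.1.1 + Real.exp (p.1.2 - n * ν), p.1.2 + p.2)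

lemma card_walkStates_le (ν : ℝ) (V : Finset ℝ) (n : ℕ) : #(walkStates ν V n) ≤ #V ^ n := by
  induction n with
  | zero => simp [walkStates]
  | succ n ih =>
    calc #(walkStates ν V (n + 1)) ≤ #(walkStates ν V n ×ˢ V) := card_image_le
      _ ≤ #V ^ n * #V := by rw [card_product]; gcongr
      _ = #V ^ (n + 1) := (pow_succ _ _).symm

lemma mem_walkStates {ν : ℝ} {V : Finset ℝ} {a : ℕ → ℝ} (ha : ∀ j, a j ∈ V) (n : ℕ) :
    (∑ k ∈ range n, expWalk ν a k, ∑ j ∈ range n, a j) ∈ walkStates ν V n := by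
  induction n with
  | zero => simp [walkStates]
  | succ n ih =>
    rw [walkStates, sum_range_succ, sum_range_succ]
    exact mem_image.2 ⟨(_, a n), mem_product.2 ⟨ih, ha n⟩, rfl⟩

-- The interval widths are the tail bound of `tsum_expWalk_le` on the event `∑ j < n, a j ≤ ε n`.
def walkCover (ν : ℝ) (V : Finset ℝ) (ε : ℝ) (n : ℕ) : Set ℝ :=
  ⋃ p ∈ walkStates ν V n,
    Set.Icc p.1 (p.1 + Real.exp ((ε - ν) * n) * (1 - Real.exp (1 - ν))⁻¹)

lemma measurableSet_walkCover (ν : ℝ) (V : Finset ℝ) (ε : ℝ) (n : ℕ) :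
    MeasurableSet (walkCover ν V ε n) :=
  (walkStates ν V n).measurableSet_biUnion fun _ _ => measurableSet_Icc

lemma volume_walkCover_le (ν : ℝ) (V : Finset ℝ) (ε : ℝ) (n : ℕ) :
    volume (walkCover ν V ε n) ≤
      ENNReal.ofReal ((#V * Real.exp (ε - ν)) ^ n * (1 - Real.exp (1 - ν))⁻¹) := by
  set w := Real.exp ((ε - ν) * n) * (1 - Real.exp (1 - ν))⁻¹
  calc volume (walkCover ν V ε n)
      ≤ ∑ p ∈ walkStates ν V n, volume (Set.Icc p.1 (p.1 + w)) := measure_biUnion_finset_le _ _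
    _ = #(walkStates ν V n) * ENNReal.ofReal w := by simp [Real.volume_Icc]
    _ ≤ (#V ^ n : ℕ) * ENNReal.ofReal w := by gcongr; exact card_walkStates_le ν V n
    _ = ENNReal.ofReal ((#V * Real.exp (ε - ν)) ^ n * (1 - Real.exp (1 - ν))⁻¹) := by
      rw [← ENNReal.ofReal_natCast, ← ENNReal.ofReal_mul (by positivity), mul_pow,
        ← Real.exp_nat_mul, mul_comm (n : ℝ), mul_assoc, Nat.cast_pow]

lemma volume_liminf_walkCover {ν : ℝ} {V : Finset ℝ} {ε : ℝ} (hν : 1 < ν)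
    (hV : #V * Real.exp (ε - ν) < 1) : volume (liminf (walkCover ν V ε) atTop) = 0 := by
  set M := (1 - Real.exp (1 - ν))⁻¹
  have hM : 0 ≤ M := inv_nonneg.2 (sub_nonneg.2 (exp_one_sub_lt_one hν).le)
  have hsum := (summable_geometric_of_lt_one (by positivity) hV).mul_right M
  refine measure_liminf_atTop_eq_zero (ne_top_of_le_ne_top
    (ofReal_ne_top (r := ∑' n : ℕ, (#V * Real.exp (ε - ν)) ^ n * M)) ?_)
  rw [ENNReal.ofReal_tsum_of_nonneg (fun n => by positivity) hsum]
  exact ENNReal.tsum_le_tsum (volume_walkCover_le ν V ε)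

lemma tsum_expWalk_mem_walkCover {ν : ℝ} {V : Finset ℝ} {ε : ℝ} {a : ℕ → ℝ} {n : ℕ}
    (hν : 1 < ν) (hV : ∀ v ∈ V, v ≤ 1) (ha : ∀ j, a j ∈ V)
    (hn : ∑ j ∈ range n, a j ≤ ε * n) : ∑' k, expWalk ν a k ∈ walkCover ν V ε n := by
  have ha' : ∀ j, a j ≤ 1 := fun j => hV _ (ha j)
  have hM : 0 ≤ (1 - Real.exp (1 - ν))⁻¹ := inv_nonneg.2 (sub_nonneg.2 (exp_one_sub_lt_one hν).le)
  have hlast : expWalk ν a n ≤ Real.exp ((ε - ν) * n) := Real.exp_le_exp.2 (by linarith)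
  refine Set.mem_biUnion (mem_walkStates ha n) ⟨?_, ?_⟩
  · exact (summable_expWalk hν ha').sum_le_tsum (range n) fun k _ => (Real.exp_pos _).le
  · exact (tsum_expWalk_le hν ha' n).trans (by gcongr)

lemma tsum_expWalk_mem_liminf_walkCover {ν : ℝ} {V : Finset ℝ} {ε : ℝ} {a : ℕ → ℝ}
    (hν : 1 < ν) (hV : ∀ v ∈ V, v ≤ 1) (ha : ∀ j, a j ∈ V)
    (hdrift : ∀ᶠ n : ℕ in atTop, ∑ j ∈ range n, a j ≤ ε * n) :
    ∑' k, expWalk ν a k ∈ liminf (walkCover ν V ε) atTop :=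
  mem_liminf_iff_eventually_mem.2 (hdrift.mono fun _ hn => tsum_expWalk_mem_walkCover hν hV ha hn)

def rademacher : Measure ℝ :=
  (1/2 : ℝ≥0∞) • Measure.dirac 1 + (1/2 : ℝ≥0∞) • Measure.dirac (-1)

lemma ae_rademacher : ∀ᵐ x ∂rademacher, x = 1 ∨ x = -1 := by
  simp [rademacher, ae_dirac_eq]

lemma integrable_id_rademacher : Integrable id rademacher := by
  simp [rademacher, integrable_add_measure, integrable_smul_measure, integrable_dirac]

lemma integral_id_rademacher : ∫ x, x ∂rademacher = 0 := by
  simp [rademacher, integral_add_measure, integrable_smul_measure, integrable_dirac]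

section Law

variable {Ω : Type*} [MeasurableSpace Ω] {P : Measure Ω} {X : Ω → ℝ}

lemma ae_eq_one_or_neg_one_of_map_eq_rademacher (hX : AEMeasurable X P)
    (h : P.map X = rademacher) : ∀ᵐ ω ∂P, X ω = 1 ∨ X ω = -1 :=
  ae_of_ae_map hX (h ▸ ae_rademacher)

lemma integrable_of_map_eq_rademacher (hX : AEMeasurable X P) (h : P.map X = rademacher) :
    Integrable X P :=
  (integrable_map_measure aestronglyMeasurable_id hX).1 (h ▸ integrable_id_rademacher)

lemma integral_eq_zero_of_map_eq_rademacher (hX : AEMeasurable X P)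
    (h : P.map X = rademacher) : ∫ ω, X ω ∂P = 0 :=
  calc ∫ ω, X ω ∂P = ∫ x, x ∂P.map X := (integral_map hX aestronglyMeasurable_id).symm
    _ = 0 := by rw [h, integral_id_rademacher]

end Law

lemma MeasureTheory.Measure.MutuallySingular.map_of_ae_mem {Ω α : Type*} [MeasurableSpace Ω]
    [MeasurableSpace α] {P : Measure Ω} {μ : Measure α} {Y : Ω → α} {B : Set α}
    (hB : MeasurableSet B) (hμB : μ B = 0) (hY : ∀ᵐ ω ∂P, Y ω ∈ B) : P.map Y ⟂ₘ μ := by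
  by_cases hYm : AEMeasurable Y P
  · refine ⟨Bᶜ, hB.compl, ?_, by rwa [compl_compl]⟩
    rw [Measure.map_apply_of_aemeasurable hYm hB.compl]
    exact ae_iff.1 hY
  · rw [Measure.map_of_not_aemeasurable hYm]
    exact .zero_left

lemma exists_pos_mul_exp_sub_lt_one {c ν : ℝ} (hc : 0 < c) (hν : Real.log c < ν) :
    ∃ ε > 0, c * Real.exp (ε - ν) < 1 := by
  refine ⟨(ν - Real.log c) / 2, by linarith, ?_⟩
  calc c * Real.exp ((ν - Real.log c) / 2 - ν)
      = Real.exp (Real.log c + ((ν - Real.log c) / 2 - ν)) := by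
        rw [Real.exp_add, Real.exp_log hc]
    _ < 1 := Real.exp_lt_one_iff.2 (by linarith)

lemma eventually_sum_range_le_mul_of_tendsto {a : ℕ → ℝ} {m ε : ℝ}
    (ha : Tendsto (fun n : ℕ => (∑ j ∈ range n, a j) / n) atTop (𝓝 m)) (hm : m < ε) :
    ∀ᶠ n : ℕ in atTop, ∑ j ∈ range n, a j ≤ ε * n := by
  filter_upwards [ha.eventually_lt_const hm, eventually_gt_atTop 0] with n hn hn0
  rw [div_lt_iff₀ (by exact_mod_cast hn0)] at hn
  exact hn.le

end

theorem stmt5_rw_exponential_functional_singular_general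
    {Ω : Type*} [MeasurableSpace Ω] (P : Measure Ω)
    (X : ℕ → Ω → ℝ)
    (hmeas : ∀ j, Measurable (X j))
    (hindep : iIndepFun X P)
    (hlaw : ∀ j, Measure.map (X j) P =
      (1/2 : ℝ≥0∞) • Measure.dirac (1 : ℝ) + (1/2 : ℝ≥0∞) • Measure.dirac (-1 : ℝ))
    (ν : ℝ) (hν : 1 < ν)
    (Y : Ω → ℝ)
    (hY : ∀ ω, Y ω = ∑' k : ℕ,
      Real.exp ((∑ j ∈ Finset.range k, X j ω) - k * ν)) :
    (Measure.map Y P) ⟂ₘ (volume : Measure ℝ) := by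
  have hcard : (#({1, -1} : Finset ℝ) : ℝ) = 2 := by
    rw [card_pair (by norm_num), Nat.cast_two]
  obtain ⟨ε, hε, hcount⟩ := exists_pos_mul_exp_sub_lt_one (c := #({1, -1} : Finset ℝ))
    (by rw [hcard]; norm_num) (by rw [hcard]; linarith [Real.log_two_lt_d9])
  have hsigns : ∀ᵐ ω ∂P, ∀ j, X j ω ∈ ({1, -1} : Finset ℝ) := ae_all_iff.2 fun j => by
    simpa using ae_eq_one_or_neg_one_of_map_eq_rademacher (hmeas j).aemeasurable (hlaw j)
  have hslln := strong_law_ae_real X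
    (integrable_of_map_eq_rademacher (hmeas 0).aemeasurable (hlaw 0))
    (fun i j hij => hindep.indepFun hij)
    (fun i => ⟨(hmeas i).aemeasurable, (hmeas 0).aemeasurable, (hlaw i).trans (hlaw 0).symm⟩)
  rw [integral_eq_zero_of_map_eq_rademacher (hmeas 0).aemeasurable (hlaw 0)] at hslln
  refine Measure.MutuallySingular.map_of_ae_mem
    (MeasurableSet.measurableSet_liminf (measurableSet_walkCover ν _ ε))
    (volume_liminf_walkCover hν hcount) ?_
  filter_upwards [hsigns, hslln] with ω hω hT
  rw [hY ω]
  exact tsum_expWalk_mem_liminf_walkCover hν (by norm_num) hω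
    (eventually_sum_range_le_mul_of_tendsto hT hε)

/-- Let `(X j)` be i.i.d. with `P(X = ±1) = 1/2`,
`S k = X 1 + ⋯ + X k`, `ν > 1` and `Y = ∑_{k≥0} exp (S k - k ν)`.  Then the
distribution of `Y` is singular with respect to Lebesgue measure. -/
theorem stmt5_rw_exponential_functional_singular
    {Ω : Type*} [MeasurableSpace Ω] (P : Measure Ω) [IsProbabilityMeasure P]
    (X : ℕ → Ω → ℝ)
    (hmeas : ∀ j, Measurable (X j))
    (hindep : iIndepFun X P)
    (hlaw : ∀ j, Measure.map (X j) P =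
      (1/2 : ℝ≥0∞) • Measure.dirac (1 : ℝ) + (1/2 : ℝ≥0∞) • Measure.dirac (-1 : ℝ))
    (ν : ℝ) (hν : 1 < ν)
    (Y : Ω → ℝ)
    (hY : ∀ ω, Y ω = ∑' k : ℕ,
      Real.exp ((∑ j ∈ Finset.range k, X j ω) - k * ν)) :
    (Measure.map Y P) ⟂ₘ (volume : Measure ℝ) :=
  stmt5_rw_exponential_functional_singular_general P X hmeas hindep hlaw ν hν Y hY
end

section
/- Let (ξ_j)_{j≥1} be i.i.d. positive with μ_p = E(ξ_1^p) < 1 for an integer p ≥ 1, and Y = Σ_{k≥0} ξ_1···ξ_k. Then the moments of Y satisfy the recursion E(Y^p) = (1 − μ_p)^{-1} Σ_{k=0}^{p−1} C(p,k) μ_k E(Y^k), where μ_k = E(ξ_1^k) and μ_0 = 1. -/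
open MeasureTheory ProbabilityTheory Finset ENNReal

/-! Let `S n N = ∑_{k<N} ξ_n ⋯ ξ_{n+k-1}`. Then `S n (N+1) = 1 + ξ_n · S (n+1) N` with `ξ_n`
independent of `S (n+1) N`, so the binomial formula gives
`E S n (N+1)^p = ∑_{k ≤ p} C(p,k) μ_k E S (n+1) N^k`. By induction on `N` these moments do not
depend on `n`, and monotone convergence turns the recursion into `x = μ_p x + c` for
`x = E Y^p`, `c = ∑_{k<p} C(p,k) μ_k E Y^k`. This forces `x = c / (1 - μ_p)` as soon as
`x ≤ c / (1 - μ_p)`, which follows by iterating `E S 0 (N+1)^p ≤ μ_p E S 0 N^p + c`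
from `E S 0 0^p = 0`. -/

namespace ENNReal

theorem one_add_mul_inv_one_sub (r : ℝ≥0∞) : 1 + r * (1 - r)⁻¹ = (1 - r)⁻¹ := by
  rw [← tsum_geometric_add_one, ← tsum_geometric r,
    tsum_eq_zero_add' (f := fun n => r ^ n) ENNReal.summable, pow_zero]

theorem le_inv_one_sub_mul_of_le_mul_add {r c : ℝ≥0∞} {a : ℕ → ℝ≥0∞} (h0 : a 0 = 0)
    (hsucc : ∀ N, a (N + 1) ≤ r * a N + c) (N : ℕ) : a N ≤ (1 - r)⁻¹ * c := by
  induction N with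
  | zero => simp [h0]
  | succ N ih =>
    calc a (N + 1) ≤ r * ((1 - r)⁻¹ * c) + c := (hsucc N).trans (by gcongr)
      _ = (1 + r * (1 - r)⁻¹) * c := by ring
      _ = (1 - r)⁻¹ * c := by rw [one_add_mul_inv_one_sub]

theorem inv_one_sub_mul_le_of_mul_add_le {r c x : ℝ≥0∞} (hr : r < 1) (h : r * x + c ≤ x) :
    (1 - r)⁻¹ * c ≤ x := by
  rcases eq_or_ne x ⊤ with rfl | hx
  · exact le_top
  have hc : c ≤ (1 - r) * x := by
    rw [ENNReal.sub_mul fun _ _ => hx, one_mul]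
    exact ENNReal.le_sub_of_add_le_left (mul_ne_top (hr.trans one_lt_top).ne hx) h
  calc (1 - r)⁻¹ * c ≤ (1 - r)⁻¹ * ((1 - r) * x) := by gcongr
    _ = x := by
      rw [← mul_assoc, ENNReal.inv_mul_cancel (tsub_pos_of_lt hr).ne'
        (sub_ne_top one_ne_top), one_mul]

end ENNReal

namespace Perpetuity

variable {Ω : Type*} {ξ : ℕ → Ω → ℝ}

noncomputable def partialSum (ξ : ℕ → Ω → ℝ) (n N : ℕ) (ω : Ω) : ℝ≥0∞ :=
  ∑ k ∈ range N, ∏ j ∈ range k, ENNReal.ofReal (ξ (n + j) ω)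

noncomputable def perpetuity (ξ : ℕ → Ω → ℝ) (ω : Ω) : ℝ≥0∞ :=
  ∑' k, ∏ j ∈ range k, ENNReal.ofReal (ξ j ω)

theorem partialSum_succ (n N : ℕ) (ω : Ω) :
    partialSum ξ n (N + 1) ω = 1 + ENNReal.ofReal (ξ n ω) * partialSum ξ (n + 1) N ω := by
  simp only [partialSum, sum_range_succ', prod_range_succ', range_zero, prod_empty, mul_sum]
  rw [add_comm]
  congr 1
  refine sum_congr rfl fun k _ => ?_
  simp only [add_zero, mul_comm, add_right_comm n, add_assoc]

theorem monotone_partialSum (n : ℕ) (ω : Ω) : Monotone fun N => partialSum ξ n N ω :=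
  fun _ _ h => sum_le_sum_of_subset (range_subset_range.2 h)

theorem monotone_partialSum_pow (n k : ℕ) (ω : Ω) :
    Monotone fun N => partialSum ξ n N ω ^ k :=
  fun _ _ h => pow_le_pow_left₀ zero_le (monotone_partialSum n ω h) k

theorem iSup_partialSum_zero (ω : Ω) : ⨆ N, partialSum ξ 0 N ω = perpetuity ξ ω := by
  simp only [partialSum, perpetuity, zero_add, ENNReal.tsum_eq_iSup_nat]

theorem partialSum_zero_le_perpetuity (N : ℕ) (ω : Ω) : partialSum ξ 0 N ω ≤ perpetuity ξ ω :=
  iSup_partialSum_zero ω ▸ le_iSup (fun N => partialSum ξ 0 N ω) N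

theorem measurable_partialSum {m : MeasurableSpace Ω} {n : ℕ}
    (hmeas : ∀ j, Measurable[m] (ξ (n + j))) (N : ℕ) : Measurable[m] (partialSum ξ n N) :=
  Finset.measurable_sum _ fun _ _ => Finset.measurable_prod _ fun j _ => (hmeas j).ennreal_ofReal

variable [MeasurableSpace Ω] {P : Measure Ω}

theorem indepFun_partialSum (hmeas : ∀ j, Measurable (ξ j)) (hindep : iIndepFun ξ P)
    (n N : ℕ) : IndepFun (ξ n) (partialSum ξ (n + 1) N) P := by
  have h := indep_iSup_of_disjoint (fun j => (hmeas j).comap_le) hindep.iIndep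
    (Set.disjoint_singleton_left.2 (lt_irrefl n) : Disjoint {n} (Set.Ioi n))
  rw [IndepFun_iff_Indep]
  refine indep_of_indep_of_le_right (indep_of_indep_of_le_left h ?_) ?_
  · exact le_iSup₂ (f := fun j (_ : j ∈ ({n} : Set ℕ)) => MeasurableSpace.comap (ξ j) _) n rfl
  · refine (measurable_partialSum (fun j => ?_) N).comap_le
    exact (comap_measurable _).mono
      (le_iSup₂ (f := fun j (_ : j ∈ Set.Ioi n) => MeasurableSpace.comap (ξ j) _) (n + 1 + j)
        (by simp only [Set.mem_Ioi]; omega)) le_rfl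

theorem monotone_lintegral_partialSum_pow (n k : ℕ) :
    Monotone fun N => ∫⁻ ω, partialSum ξ n N ω ^ k ∂P :=
  fun _ _ h => lintegral_mono fun ω => monotone_partialSum_pow n k ω h

theorem lintegral_perpetuity_pow_eq_iSup (hmeas : ∀ j, Measurable (ξ j)) (k : ℕ) :
    ∫⁻ ω, perpetuity ξ ω ^ k ∂P = ⨆ N, ∫⁻ ω, partialSum ξ 0 N ω ^ k ∂P := by
  simp_rw [← iSup_partialSum_zero, ENNReal.iSup_pow]
  exact lintegral_iSup (fun N => (measurable_partialSum (fun j => hmeas _) N).pow_const k)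
    fun _ _ h ω => monotone_partialSum_pow 0 k ω h

variable (hmeas : ∀ j, Measurable (ξ j)) (hindep : iIndepFun ξ P)
  (hident : ∀ j, Measure.map (ξ j) P = Measure.map (ξ 0) P)
include hmeas hindep hident

theorem lintegral_partialSum_succ_pow (n N p : ℕ) :
    ∫⁻ ω, partialSum ξ n (N + 1) ω ^ p ∂P = ∑ k ∈ range (p + 1),
      p.choose k * (∫⁻ ω, ENNReal.ofReal (ξ 0 ω) ^ k ∂P) *
        ∫⁻ ω, partialSum ξ (n + 1) N ω ^ k ∂P := by
  have htail : Measurable (partialSum ξ (n + 1) N) :=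
    measurable_partialSum (fun j => hmeas _) N
  have hpow_meas (k : ℕ) : Measurable fun x : ℝ => ENNReal.ofReal x ^ k := by fun_prop
  have hmoment (k : ℕ) :
      ∫⁻ ω, ENNReal.ofReal (ξ n ω) ^ k ∂P = ∫⁻ ω, ENNReal.ofReal (ξ 0 ω) ^ k ∂P := by
    rw [← lintegral_map (hpow_meas k) (hmeas n), hident n, lintegral_map (hpow_meas k) (hmeas 0)]
  simp_rw [partialSum_succ, add_comm (1 : ℝ≥0∞), add_pow, one_pow, mul_one, mul_pow]
  rw [lintegral_finsetSum _ fun k _ => by fun_prop]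
  refine sum_congr rfl fun k _ => ?_
  have hindep_k : IndepFun (fun ω => ENNReal.ofReal (ξ n ω) ^ k)
      (fun ω => partialSum ξ (n + 1) N ω ^ k) P :=
    (indepFun_partialSum hmeas hindep n N).comp (hpow_meas k) (measurable_id.pow_const k)
  rw [lintegral_mul_const _ (by fun_prop), lintegral_mul_eq_lintegral_mul_lintegral_of_indepFun''
    (by fun_prop) (by fun_prop) hindep_k, hmoment]
  ring

theorem lintegral_partialSum_pow_shift (N n k : ℕ) :
    ∫⁻ ω, partialSum ξ n N ω ^ k ∂P = ∫⁻ ω, partialSum ξ 0 N ω ^ k ∂P := by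
  induction N generalizing n k with
  | zero => simp [partialSum]
  | succ N ih =>
    simp only [lintegral_partialSum_succ_pow hmeas hindep hident, ih (n + 1), ih 1]

theorem lintegral_partialSum_zero_succ_pow (N p : ℕ) :
    ∫⁻ ω, partialSum ξ 0 (N + 1) ω ^ p ∂P = ∑ k ∈ range (p + 1),
      p.choose k * (∫⁻ ω, ENNReal.ofReal (ξ 0 ω) ^ k ∂P) *
        ∫⁻ ω, partialSum ξ 0 N ω ^ k ∂P := by
  simp only [lintegral_partialSum_succ_pow hmeas hindep hident,
    lintegral_partialSum_pow_shift hmeas hindep hident N 1]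

theorem lintegral_perpetuity_pow (p : ℕ) :
    ∫⁻ ω, perpetuity ξ ω ^ p ∂P = ∑ k ∈ range (p + 1),
      p.choose k * (∫⁻ ω, ENNReal.ofReal (ξ 0 ω) ^ k ∂P) *
        ∫⁻ ω, perpetuity ξ ω ^ k ∂P := by
  simp_rw [lintegral_perpetuity_pow_eq_iSup hmeas, ENNReal.mul_iSup]
  rw [← (monotone_lintegral_partialSum_pow (ξ := ξ) (P := P) 0 p).iSup_nat_add 1,
    ENNReal.finsetSum_iSup_of_monotone]
  · simp only [lintegral_partialSum_zero_succ_pow hmeas hindep hident]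
  · exact fun k _ _ h => mul_le_mul_right (monotone_lintegral_partialSum_pow 0 k h) _

end Perpetuity

open Perpetuity in
theorem stmt8_moment_recursion_general
    {Ω : Type*} [MeasurableSpace Ω] (P : Measure Ω)
    (ξ : ℕ → Ω → ℝ)
    (hmeas : ∀ j, Measurable (ξ j))
    (hindep : iIndepFun ξ P)
    (hident : ∀ j, Measure.map (ξ j) P = Measure.map (ξ 0) P)
    (Y : Ω → ℝ≥0∞)
    (hY : ∀ ω, Y ω = ∑' k, ∏ j ∈ Finset.range k, ENNReal.ofReal (ξ j ω))
    (p : ℕ) (hp : 1 ≤ p)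
    (μ : ℕ → ℝ≥0∞) (hμ : ∀ k, μ k = ∫⁻ ω, (ENNReal.ofReal (ξ 0 ω)) ^ (k : ℕ) ∂P)
    (hμp : μ p < 1) :
    (∫⁻ ω, (Y ω) ^ (p : ℕ) ∂P) =
      (1 - μ p)⁻¹ *
        ∑ k ∈ Finset.range p, (p.choose k : ℝ≥0∞) * μ k * ∫⁻ ω, (Y ω) ^ (k : ℕ) ∂P := by
  obtain rfl : Y = perpetuity ξ := funext hY
  have split_top (f : ℕ → ℝ≥0∞) : ∑ k ∈ range (p + 1), (p.choose k : ℝ≥0∞) * μ k * f k =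
      μ p * f p + ∑ k ∈ range p, (p.choose k : ℝ≥0∞) * μ k * f k := by
    rw [sum_range_succ, Nat.choose_self, Nat.cast_one, one_mul, add_comm]
  have hrec := lintegral_perpetuity_pow hmeas hindep hident p
  have hstep := lintegral_partialSum_zero_succ_pow hmeas hindep hident (p := p)
  simp only [← hμ, split_top] at hrec hstep
  refine le_antisymm ?_ (ENNReal.inv_one_sub_mul_le_of_mul_add_le hμp hrec.ge)
  rw [lintegral_perpetuity_pow_eq_iSup hmeas]
  refine iSup_le (ENNReal.le_inv_one_sub_mul_of_le_mul_add ?_ fun N => ?_)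
  · simp [partialSum, zero_pow (Nat.one_le_iff_ne_zero.1 hp)]
  · rw [hstep]
    gcongr with k _ ω
    exact partialSum_zero_le_perpetuity N ω

/-- Theorem 2 of the paper, recursion formula. For an i.i.d.
sequence of positive random variables `ξ j` with `μ_p = E(ξ₁^p) < 1` for an
integer `p ≥ 1`, and `Y = ∑_{k≥0} ξ₁⋯ξ_k`, the moments of `Y` satisfy
`E(Y^p) = (1 - μ_p)⁻¹ ∑_{k=0}^{p-1} C(p,k) μ_k E(Y^k)`, where `μ_k = E(ξ₁^k)`
(and `μ₀ = 1`). -/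
theorem stmt8_moment_recursion
    {Ω : Type*} [MeasurableSpace Ω] (P : Measure Ω) [IsProbabilityMeasure P]
    (ξ : ℕ → Ω → ℝ)
    (hmeas : ∀ j, Measurable (ξ j))
    (hpos : ∀ j ω, 0 < ξ j ω)
    (hindep : iIndepFun ξ P)
    (hident : ∀ j, Measure.map (ξ j) P = Measure.map (ξ 0) P)
    (Y : Ω → ℝ≥0∞)
    (hY : ∀ ω, Y ω = ∑' k, ∏ j ∈ Finset.range k, ENNReal.ofReal (ξ j ω))
    (p : ℕ) (hp : 1 ≤ p)
    (μ : ℕ → ℝ≥0∞) (hμ : ∀ k, μ k = ∫⁻ ω, (ENNReal.ofReal (ξ 0 ω)) ^ (k : ℕ) ∂P)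
    (hμp : μ p < 1) :
    (∫⁻ ω, (Y ω) ^ (p : ℕ) ∂P) =
      (1 - μ p)⁻¹ *
        ∑ k ∈ Finset.range p, (p.choose k : ℝ≥0∞) * μ k * ∫⁻ ω, (Y ω) ^ (k : ℕ) ∂P :=
  stmt8_moment_recursion_general P ξ hmeas hindep hident Y hY p hp μ hμ hμp
end

section
/- Let Y = Σ_{k≥0} exp(S_k − kν) with S_k a simple symmetric random walk. If 0 < ν < log cosh(1) ≈ 0.43378, then E(Y) = ∞, and more generally for every 0 < ν < 1 only finitely many positive integer moments of Y are finite: E(Y^k) = ∞ whenever ν ≤ k^{-1} log cosh(k). -/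
open MeasureTheory ProbabilityTheory Finset ENNReal

/-!
Write `S_n = X_0 + ⋯ + X_{n-1}`. By independence `E exp(k S_n) = (cosh k)^n`, so the `n`-th term
`a_n = exp(S_n - nν)` of `Y` satisfies `E(a_n^k) = μ_k^n` with `μ_k = e^{-kν} cosh k`. Since
`∑ a_n^k ≤ (∑ a_n)^k = Y^k`, we get `E(Y^k) ≥ ∑ μ_k^n`, which diverges as soon as `μ_k ≥ 1`,
i.e. as soon as `ν ≤ k⁻¹ log cosh k`.
-/

noncomputable def rademacherMeasure : Measure ℝ :=
  (1/2 : ℝ≥0∞) • Measure.dirac (1 : ℝ) + (1/2 : ℝ≥0∞) • Measure.dirac (-1 : ℝ)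

lemma ENNReal.tsum_pow_le_pow_tsum {ι : Type*} (f : ι → ℝ≥0∞) {k : ℕ} (hk : k ≠ 0) :
    ∑' i, f i ^ k ≤ (∑' i, f i) ^ k := by
  obtain ⟨m, rfl⟩ := Nat.exists_eq_succ_of_ne_zero hk
  calc ∑' i, f i ^ (m + 1) ≤ ∑' i, (∑' j, f j) ^ m * f i :=
        ENNReal.tsum_le_tsum fun i => by
          rw [pow_succ]; gcongr; exact ENNReal.le_tsum i
    _ = (∑' i, f i) ^ (m + 1) := by rw [ENNReal.tsum_mul_left, pow_succ]

lemma one_le_exp_neg_mul_mul_cosh {k ν : ℝ} (hk : 0 < k)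
    (hν : ν ≤ k⁻¹ * Real.log (Real.cosh k)) :
    1 ≤ Real.exp (-(k * ν)) * Real.cosh k := by
  have hkν : k * ν ≤ Real.log (Real.cosh k) := by
    rwa [le_inv_mul_iff₀ hk] at hν
  rw [Real.exp_neg, inv_mul_eq_div, one_le_div (Real.exp_pos _),
    ← Real.exp_log (Real.cosh_pos k)]
  exact Real.exp_le_exp.mpr hkν

section RandomWalk

variable {Ω : Type*} [MeasurableSpace Ω] {P : Measure Ω}

lemma lintegral_ofReal_exp_mul_eq_cosh {f : Ω → ℝ} (hf : Measurable f)
    (hlaw : Measure.map f P = rademacherMeasure) (t : ℝ) :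
    ∫⁻ ω, ENNReal.ofReal (Real.exp (t * f ω)) ∂P = ENNReal.ofReal (Real.cosh t) := by
  rw [← lintegral_map (f := fun x => ENNReal.ofReal (Real.exp (t * x))) (by fun_prop) hf, hlaw, rademacherMeasure, lintegral_add_measure,
    lintegral_smul_measure, lintegral_smul_measure, lintegral_dirac, lintegral_dirac,
    Real.cosh_eq, ENNReal.ofReal_div_of_pos two_pos,
    ENNReal.ofReal_add (Real.exp_nonneg _) (Real.exp_nonneg _), ENNReal.add_div]
  simp [ENNReal.div_eq_inv_mul]

variable {X : ℕ → Ω → ℝ}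

lemma lintegral_ofReal_exp_mul_sum_range_eq_cosh_pow (hmeas : ∀ j, Measurable (X j))
    (hindep : iIndepFun X P) (hlaw : ∀ j, Measure.map (X j) P = rademacherMeasure)
    (t : ℝ) (n : ℕ) :
    ∫⁻ ω, ENNReal.ofReal (Real.exp (t * ∑ j ∈ range n, X j ω)) ∂P
      = ENNReal.ofReal (Real.cosh t) ^ n := by
  have hexp : ∀ ω, ENNReal.ofReal (Real.exp (t * ∑ j ∈ range n, X j ω))
      = ∏ j ∈ range n, ENNReal.ofReal (Real.exp (t * X j ω)) := fun ω => by
    rw [mul_sum, Real.exp_sum, ENNReal.ofReal_prod_of_nonneg fun j _ => (Real.exp_pos _).le]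
  simp_rw [hexp]
  rw [lintegral_prod_eq_prod_lintegral_of_indepFun _
      (fun j ω => ENNReal.ofReal (Real.exp (t * X j ω)))
      (hindep.comp (fun _ x => ENNReal.ofReal (Real.exp (t * x))) fun _ => by fun_prop)
      fun j => by fun_prop]
  simp_rw [lintegral_ofReal_exp_mul_eq_cosh (hmeas _) (hlaw _)]
  rw [prod_const, card_range]

lemma lintegral_ofReal_exp_sum_range_sub_pow (hmeas : ∀ j, Measurable (X j))
    (hindep : iIndepFun X P) (hlaw : ∀ j, Measure.map (X j) P = rademacherMeasure)
    (ν : ℝ) (k n : ℕ) :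
    ∫⁻ ω, ENNReal.ofReal (Real.exp ((∑ j ∈ range n, X j ω) - n * ν)) ^ k ∂P
      = ENNReal.ofReal (Real.exp (-(k * ν)) * Real.cosh k) ^ n := by
  have hsplit : ∀ ω, ENNReal.ofReal (Real.exp ((∑ j ∈ range n, X j ω) - n * ν)) ^ k
      = ENNReal.ofReal (Real.exp (-(k * ν))) ^ n
        * ENNReal.ofReal (Real.exp (k * ∑ j ∈ range n, X j ω)) := fun ω => by
    rw [← ENNReal.ofReal_pow (Real.exp_nonneg _), ← ENNReal.ofReal_pow (Real.exp_nonneg _),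
      ← ENNReal.ofReal_mul (by positivity), ← Real.exp_nat_mul, ← Real.exp_nat_mul,
      ← Real.exp_add]
    ring_nf
  simp_rw [hsplit]
  rw [lintegral_const_mul _ (by fun_prop),
    lintegral_ofReal_exp_mul_sum_range_eq_cosh_pow hmeas hindep hlaw, ← mul_pow,
    ← ENNReal.ofReal_mul (Real.exp_nonneg _)]

lemma lintegral_tsum_ofReal_exp_sum_range_sub_pow_eq_top (hmeas : ∀ j, Measurable (X j))
    (hindep : iIndepFun X P) (hlaw : ∀ j, Measure.map (X j) P = rademacherMeasure)
    {ν : ℝ} {k : ℕ} (hk : k ≠ 0) (hν : ν ≤ (k : ℝ)⁻¹ * Real.log (Real.cosh k)) :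
    ∫⁻ ω, (∑' n : ℕ, ENNReal.ofReal (Real.exp ((∑ j ∈ range n, X j ω) - n * ν))) ^ k ∂P
      = ⊤ := by
  have hμ : 1 ≤ ENNReal.ofReal (Real.exp (-(k * ν)) * Real.cosh k) :=
    ENNReal.one_le_ofReal.mpr (one_le_exp_neg_mul_mul_cosh (by positivity) hν)
  refine top_unique ?_
  calc ⊤ = ∑' _ : ℕ, (1 : ℝ≥0∞) := (ENNReal.tsum_const_eq_top_of_ne_zero one_ne_zero).symm
    _ ≤ ∑' n : ℕ, ENNReal.ofReal (Real.exp (-(k * ν)) * Real.cosh k) ^ n :=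
        ENNReal.tsum_le_tsum fun n => one_le_pow₀ hμ
    _ = ∫⁻ ω, ∑' n : ℕ, ENNReal.ofReal (Real.exp ((∑ j ∈ range n, X j ω) - n * ν)) ^ k ∂P := by
        rw [lintegral_tsum fun n => by fun_prop]
        simp_rw [lintegral_ofReal_exp_sum_range_sub_pow hmeas hindep hlaw]
    _ ≤ _ := lintegral_mono fun ω => ENNReal.tsum_pow_le_pow_tsum _ hk

end RandomWalk

theorem stmt10_infinite_moments_general
    {Ω : Type*} [MeasurableSpace Ω] (P : Measure Ω)
    (X : ℕ → Ω → ℝ)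
    (hmeas : ∀ j, Measurable (X j))
    (hindep : iIndepFun X P)
    (hlaw : ∀ j, Measure.map (X j) P =
      (1/2 : ℝ≥0∞) • Measure.dirac (1 : ℝ) + (1/2 : ℝ≥0∞) • Measure.dirac (-1 : ℝ))
    (ν : ℝ)
    (Y : Ω → ℝ≥0∞)
    (hY : ∀ ω, Y ω = ∑' k : ℕ,
      ENNReal.ofReal (Real.exp ((∑ j ∈ Finset.range k, X j ω) - k * ν))) :
    (ν < Real.log (Real.cosh 1) → (∫⁻ ω, Y ω ∂P) = ⊤) ∧
    (∀ k : ℕ, 1 ≤ k → ν ≤ (k : ℝ)⁻¹ * Real.log (Real.cosh k) →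
      (∫⁻ ω, (Y ω) ^ (k : ℕ) ∂P) = ⊤) := by
  have moments : ∀ k : ℕ, 1 ≤ k → ν ≤ (k : ℝ)⁻¹ * Real.log (Real.cosh k) →
      (∫⁻ ω, (Y ω) ^ (k : ℕ) ∂P) = ⊤ := fun k hk hνk => by
    rw [funext hY]
    exact lintegral_tsum_ofReal_exp_sum_range_sub_pow_eq_top hmeas hindep hlaw
      (Nat.one_le_iff_ne_zero.mp hk) hνk
  refine ⟨fun hν1 => ?_, moments⟩
  simpa using moments 1 le_rfl (by simpa using hν1.le)

/-- Let `Y = ∑_{k≥0} exp(S_k - kν)` with `S_k` a simple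
symmetric random walk.  If `0 < ν < log (cosh 1)` then `E(Y) = ∞`; more
generally, for `0 < ν < 1`, `E(Y^k) = ∞` whenever `ν ≤ k⁻¹ log (cosh k)`
(so only finitely many positive integer moments of `Y` are finite). -/
theorem stmt10_infinite_moments
    {Ω : Type*} [MeasurableSpace Ω] (P : Measure Ω) [IsProbabilityMeasure P]
    (X : ℕ → Ω → ℝ)
    (hmeas : ∀ j, Measurable (X j))
    (hindep : iIndepFun X P)
    (hlaw : ∀ j, Measure.map (X j) P =
      (1/2 : ℝ≥0∞) • Measure.dirac (1 : ℝ) + (1/2 : ℝ≥0∞) • Measure.dirac (-1 : ℝ))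
    (ν : ℝ) (hν : 0 < ν)
    (Y : Ω → ℝ≥0∞)
    (hY : ∀ ω, Y ω = ∑' k : ℕ,
      ENNReal.ofReal (Real.exp ((∑ j ∈ Finset.range k, X j ω) - k * ν))) :
    (ν < Real.log (Real.cosh 1) → (∫⁻ ω, Y ω ∂P) = ⊤) ∧
    (∀ k : ℕ, 1 ≤ k → ν ≤ (k : ℝ)⁻¹ * Real.log (Real.cosh k) →
      (∫⁻ ω, (Y ω) ^ (k : ℕ) ∂P) = ⊤) :=
  stmt10_infinite_moments_general P X hmeas hindep hlaw ν Y hY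
end
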